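/- arXiv:2206.13120 — 4 statements merged into one kernel-verified Lean document; each statement's English description precedes it below -/
import Mathlib

section
/- Let W be a random variable with values in [0,∞) with cdf H, and let H_1(t) = P(W ≤ t, W = X) for another random variable X. Suppose for each n, η_1^{(n)},…,η_n^{(n)} are mutually independent [0,1]-valued random variables and (W_i) are iid copies of W, with sup_{t≥0} |(1/n)∑_{i=1}^n E[1_{W_i ≤ t} η_i^{(n)}] − H_1(t)| → 0 as n → ∞. Then sup_{t≥0} |(1/n)∑_{i=1}^n 1_{W_i ≤ t} η_i^{(n)} − H_1(t)| → 0 almost surely as n → ∞. -/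
/-! Within a row the summands `η_i 1{W_i ∈ B}` are independent and `[0, 1]`-valued, so by
Hoeffding's inequality and Borel–Cantelli the row average minus its mean tends to `0` almost surely,
for each fixed measurable `B`. Uniformity in `t ≥ 0` comes from bracketing, as for
Glivenko–Cantelli: given `ε > 0`, finitely many brackets `Iic s ⊆ U` with `s ≥ 0` and
`W`-mass of `U \ Iic s` at most `ε` squeeze every `Iic t`, `t ≥ 0`. By monotonicity in `B`, the
error at `t` is then controlled by the a.s. vanishing errors at the finitely many bracket ends, by
`ε` (the mean and `H₁` grow by at most the `W`-mass across a bracket), and, at the lower end `s`,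
by (3.1). -/

open MeasureTheory ProbabilityTheory Filter Set
open scoped Topology NNReal

namespace ProbabilityTheory

variable {Ω : Type*} [MeasurableSpace Ω] {μ : Measure Ω}

lemma measureReal_abs_sum_range_ge_le [IsFiniteMeasure μ] {X : ℕ → Ω → ℝ}
    (h_indep : iIndepFun X μ) {c : ℝ≥0} {n : ℕ} (h_subG : ∀ i < n, HasSubgaussianMGF (X i) c μ)
    {ε : ℝ} (hε : 0 ≤ ε) :
    μ.real {ω | ε ≤ |∑ i ∈ Finset.range n, X i ω|} ≤ 2 * Real.exp (-ε ^ 2 / (2 * n * c)) := by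
  have h_neg : iIndepFun (fun i ω => -X i ω) μ :=
    h_indep.comp (fun _ x => -x) fun _ => measurable_neg
  have h_upper := HasSubgaussianMGF.measure_sum_range_ge_le_of_iIndepFun h_indep h_subG hε
  have h_lower := HasSubgaussianMGF.measure_sum_range_ge_le_of_iIndepFun h_neg
    (fun i hi => (h_subG i hi).neg) hε
  have h_cover : {ω | ε ≤ |∑ i ∈ Finset.range n, X i ω|} ⊆
      {ω | ε ≤ ∑ i ∈ Finset.range n, X i ω} ∪ {ω | ε ≤ ∑ i ∈ Finset.range n, -X i ω} := by
    intro ω hω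
    simp only [mem_ofPred_eq, mem_union, Finset.sum_neg_distrib] at hω ⊢
    rcases le_abs'.1 hω with h | h
    · exact Or.inr (by linarith)
    · exact Or.inl h
  calc μ.real {ω | ε ≤ |∑ i ∈ Finset.range n, X i ω|}
      ≤ μ.real {ω | ε ≤ ∑ i ∈ Finset.range n, X i ω}
        + μ.real {ω | ε ≤ ∑ i ∈ Finset.range n, -X i ω} :=
        (measureReal_mono h_cover).trans (measureReal_union_le _ _)
    _ ≤ 2 * Real.exp (-ε ^ 2 / (2 * n * c)) := by linarith

lemma ae_tendsto_zero_of_summable_measureReal_abs_ge [IsFiniteMeasure μ] {X : ℕ → Ω → ℝ}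
    (h : ∀ ε > 0, Summable fun n => μ.real {ω | ε ≤ |X n ω|}) :
    ∀ᵐ ω ∂μ, Tendsto (fun n => X n ω) atTop (𝓝 0) := by
  have h_ae : ∀ᵐ ω ∂μ, ∀ m : ℕ, ∀ᶠ n in atTop, ω ∉ {ω | ((m : ℝ) + 1)⁻¹ ≤ |X n ω|} := by
    refine ae_all_iff.2 fun m => ae_eventually_notMem ?_
    have hs := h _ (Nat.inv_pos_of_nat (n := m))
    rw [tsum_congr fun n => (ofReal_measureReal (μ := μ)).symm,
      ← ENNReal.ofReal_tsum_of_nonneg (fun _ => measureReal_nonneg) hs]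
    exact ENNReal.ofReal_ne_top
  filter_upwards [h_ae] with ω hω
  refine Metric.tendsto_nhds.2 fun ε hε => ?_
  obtain ⟨m, hm⟩ := exists_nat_one_div_lt hε
  filter_upwards [hω m] with n hn
  simp only [not_le] at hn
  rw [Real.dist_0_eq_abs]
  exact hn.trans (by simpa using hm)

theorem ae_tendsto_inv_mul_sum_sub_integral [IsProbabilityMeasure μ] {Z : ℕ → ℕ → Ω → ℝ}
    {a b : ℝ} (hZ : ∀ n i, AEMeasurable (Z n i) μ) (hb : ∀ n i, ∀ᵐ ω ∂μ, Z n i ω ∈ Icc a b)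
    (hind : ∀ n, iIndepFun (Z n) μ) :
    ∀ᵐ ω ∂μ, Tendsto (fun n : ℕ => (n : ℝ)⁻¹ * ∑ i ∈ Finset.range n, (Z n i ω - μ[Z n i]))
      atTop (𝓝 0) := by
  -- Enlarging `[a, b]` to `[a, max b (a + 1)]` keeps the variance proxy `c` positive, so that the
  -- Hoeffding bounds below form a convergent geometric series.
  set c : ℝ≥0 := (‖max b (a + 1) - a‖₊ / 2) ^ 2
  have hc : 0 < (c : ℝ) := NNReal.coe_pos.2 <| pow_pos (div_pos (nnnorm_pos.2
    (sub_pos.2 ((lt_add_one a).trans_le (le_max_right _ _))).ne') two_pos) 2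
  have hsubG : ∀ n i, HasSubgaussianMGF (fun ω => Z n i ω - μ[Z n i]) c μ := fun n i =>
    hasSubgaussianMGF_of_mem_Icc (hZ n i)
      ((hb n i).mono fun ω h => ⟨h.1, h.2.trans (le_max_left _ _)⟩)
  have hind_centered (n : ℕ) : iIndepFun (fun i ω => Z n i ω - μ[Z n i]) μ :=
    (hind n).comp (fun i (x : ℝ) => x - ∫ ω, Z n i ω ∂μ) fun _ => measurable_id.sub_const _
  refine ae_tendsto_zero_of_summable_measureReal_abs_ge fun ε hε => ?_
  have hr : Real.exp (-ε ^ 2 / (2 * c)) < 1 :=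
    Real.exp_lt_one_iff.2 (div_neg_of_neg_of_pos (neg_neg_of_pos (pow_pos hε 2)) (by positivity))
  refine Summable.of_nonneg_of_le (fun _ => measureReal_nonneg) (fun n => ?_)
    ((summable_geometric_of_lt_one (Real.exp_pos _).le hr).mul_left 2)
  rcases n.eq_zero_or_pos with rfl | hn
  · simp [hε.not_ge]
  have hset : {ω | ε ≤ |(n : ℝ)⁻¹ * ∑ i ∈ Finset.range n, (Z n i ω - μ[Z n i])|}
      = {ω | n * ε ≤ |∑ i ∈ Finset.range n, (Z n i ω - μ[Z n i])|} := by
    ext ω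
    rw [mem_ofPred_eq, mem_ofPred_eq, abs_mul, abs_inv, Nat.abs_cast,
      le_inv_mul_iff₀ (by positivity)]
  rw [hset]
  refine (measureReal_abs_sum_range_ge_le (hind_centered n) (fun i _ => hsubG n i)
    (by positivity)).trans_eq ?_
  rw [← Real.exp_nat_mul]
  congr 2
  field_simp

end ProbabilityTheory

/-- A pair `(s, U) ∈ 𝓑` stands for the bracket `Iic s ⊆ U`; the half-lines `Iic t`, `t ≥ a`, are
each squeezed into one of them. -/
structure IsHalfLineBracketing (ν : Measure ℝ) (ε a : ℝ) (𝓑 : Finset (ℝ × Set ℝ)) : Prop where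
  le_fst : ∀ p ∈ 𝓑, a ≤ p.1
  measurableSet_snd : ∀ p ∈ 𝓑, MeasurableSet p.2
  measureReal_sdiff_le : ∀ p ∈ 𝓑, ν.real (p.2 \ Iic p.1) ≤ ε
  exists_mem : ∀ t, a ≤ t → ∃ p ∈ 𝓑, p.1 ≤ t ∧ Iic t ⊆ p.2

namespace IsHalfLineBracketing

variable {ν : Measure ℝ} {ε a b : ℝ} {𝓑 : Finset (ℝ × Set ℝ)}

lemma singleton (h : ν.real (Ioi a) ≤ ε) : IsHalfLineBracketing ν ε a {(a, univ)} where
  le_fst := by simp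
  measurableSet_snd := by simp
  measureReal_sdiff_le := by simpa [← compl_eq_univ_sdiff] using h
  exists_mem t ht := ⟨(a, univ), Finset.mem_singleton_self _, ht, subset_univ _⟩

lemma insert [DecidableEq (ℝ × Set ℝ)] (h𝓑 : IsHalfLineBracketing ν ε b 𝓑) (hab : a ≤ b)
    (h : ν.real (Ioo a b) ≤ ε) : IsHalfLineBracketing ν ε a (insert (a, Iio b) 𝓑) where
  le_fst := Finset.forall_mem_insert _ _ _ |>.2 ⟨le_rfl, fun p hp => hab.trans (h𝓑.le_fst p hp)⟩
  measurableSet_snd :=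
    Finset.forall_mem_insert _ _ _ |>.2 ⟨measurableSet_Iio, h𝓑.measurableSet_snd⟩
  measureReal_sdiff_le := Finset.forall_mem_insert _ _ _ |>.2
    ⟨by rwa [show Iio b \ Iic a = Ioo a b by ext; simp], h𝓑.measureReal_sdiff_le⟩
  exists_mem t ht := by
    rcases lt_or_ge t b with htb | hbt
    · exact ⟨(a, Iio b), Finset.mem_insert_self _ _, ht, Iic_subset_Iio.2 htb⟩
    · obtain ⟨p, hp, hpt⟩ := h𝓑.exists_mem t hbt
      exact ⟨p, Finset.mem_insert_of_mem hp, hpt⟩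

end IsHalfLineBracketing

lemma exists_measureReal_Ioo_le_le_measureReal_Ioc (ν : Measure ℝ) [IsProbabilityMeasure ν]
    {a ε : ℝ} (hε : 0 < ε) (h : ε < ν.real (Ioi a)) :
    ∃ b, a ≤ b ∧ ν.real (Ioo a b) ≤ ε ∧ ε ≤ ν.real (Ioc a b) := by
  set F := cdf ν
  have hν (s : Set ℝ) : ν.real s = (F.measure s).toReal := by rw [measure_cdf]; rfl
  have hFa : F a + ε < 1 := by
    rw [← compl_Iic, measureReal_compl measurableSet_Iic, probReal_univ, ← cdf_eq_real] at h
    linarith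
  set S := {t | F a + ε ≤ F t}
  have hS_gt : ∀ t ∈ S, a < t := fun t ht =>
    lt_of_not_ge fun hta => by linarith [F.mono hta, show F a + ε ≤ F t from ht]
  have hS : S.Nonempty := ((tendsto_cdf_atTop ν).eventually (eventually_ge_nhds hFa)).exists
  have hS_bdd : BddBelow S := ⟨a, fun t ht => (hS_gt t ht).le⟩
  set b := sInf S
  have hFb : F a + ε ≤ F b := by
    have hright : ∀ t ∈ Ioi b, F a + ε ≤ F t := fun t ht => by
      obtain ⟨s, hs, hst⟩ := exists_lt_of_csInf_lt hS ht
      exact le_trans hs (F.mono hst.le)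
    exact ge_of_tendsto ((F.right_continuous b).mono Ioi_subset_Ici_self)
      (eventually_nhdsWithin_of_forall hright)
  have hleft : Function.leftLim F b ≤ F a + ε := by
    rw [F.mono.leftLim_eq_sSup]
    refine csSup_le (nonempty_Iio.image _) ?_
    rintro _ ⟨t, htb, rfl⟩
    exact (not_le.1 fun ht => (not_le.2 htb) (csInf_le hS_bdd ht)).le
  refine ⟨b, le_csInf hS fun t ht => (hS_gt t ht).le, ?_, ?_⟩
  · rw [hν, F.measure_Ioo, ENNReal.toReal_ofReal']
    exact max_le (by linarith) hε.le
  · rw [hν, F.measure_Ioc, ENNReal.toReal_ofReal']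
    exact le_max_of_le_left (by linarith)

theorem exists_isHalfLineBracketing (ν : Measure ℝ) [IsProbabilityMeasure ν] {ε : ℝ}
    (hε : 0 < ε) (a : ℝ) : ∃ 𝓑, IsHalfLineBracketing ν ε a 𝓑 := by
  classical
  -- Greedily cut off brackets `(a, Iio b)` with `ε ≤ ν (Ioc a b)` until the tail `Ioi b` has
  -- mass `≤ ε`; each cut lowers the tail mass by at least `ε`.
  suffices h : ∀ N : ℕ, ∀ a, ν.real (Ioi a) ≤ N * ε → ∃ 𝓑, IsHalfLineBracketing ν ε a 𝓑 by
    refine h ⌈ε⁻¹⌉₊ a (measureReal_le_one.trans ?_)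
    calc (1 : ℝ) = ε⁻¹ * ε := (inv_mul_cancel₀ hε.ne').symm
      _ ≤ ⌈ε⁻¹⌉₊ * ε := by gcongr; exact Nat.le_ceil _
  intro N
  induction N with
  | zero =>
    intro a ha
    exact ⟨_, .singleton (ha.trans (by simpa using hε.le))⟩
  | succ N ih =>
    intro a ha
    by_cases htail : ν.real (Ioi a) ≤ ε
    · exact ⟨_, .singleton htail⟩
    obtain ⟨b, hab, hIoo, hIoc⟩ :=
      exists_measureReal_Ioo_le_le_measureReal_Ioc ν hε (not_le.1 htail)
    have hb : ν.real (Ioi b) ≤ N * ε := by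
      have := measureReal_union (μ := ν) (Ioc_disjoint_Ioi_same (a := a) (b := b)) measurableSet_Ioi
      rw [Ioc_union_Ioi_eq_Ioi hab] at this
      push_cast at ha
      linarith
    obtain ⟨𝓑, h𝓑⟩ := ih b hb
    exact ⟨_, h𝓑.insert hab hIoo⟩

section Deterministic

variable {ν : Measure ℝ} [IsFiniteMeasure ν] {E M : ℕ → Set ℝ → ℝ} {H : Set ℝ → ℝ} {a : ℝ}

lemma IsHalfLineBracketing.eventually_abs_sub_lt {ε δ : ℝ} {𝓑 : Finset (ℝ × Set ℝ)}
    (h𝓑 : IsHalfLineBracketing ν ε a 𝓑) (hE : ∀ n, Monotone (E n))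
    (hM : ∀ n B B', MeasurableSet B → MeasurableSet B' → B ⊆ B' → M n B' - M n B ≤ ν.real (B' \ B))
    (hH : Monotone H) (hH' : ∀ B B', H B' - H B ≤ ν.real (B' \ B))
    (hmean : TendstoUniformlyOn (fun n t => M n (Iic t)) (fun t => H (Iic t)) atTop (Ici a))
    (hconv : ∀ p ∈ 𝓑, Tendsto (fun n => E n (Iic p.1) - M n (Iic p.1)) atTop (𝓝 0) ∧
      Tendsto (fun n => E n p.2 - M n p.2) atTop (𝓝 0))
    (hδ : 0 < δ) :
    ∀ᶠ n in atTop, ∀ t ∈ Ici a, |E n (Iic t) - H (Iic t)| < ε + 2 * δ := by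
  have hgrid : ∀ᶠ n in atTop, ∀ p ∈ 𝓑,
      |E n (Iic p.1) - M n (Iic p.1)| < δ ∧ |E n p.2 - M n p.2| < δ := by
    refine (eventually_all_finset 𝓑).2 fun p hp => ?_
    simp only [← Real.dist_0_eq_abs]
    exact (Metric.tendsto_nhds.1 (hconv p hp).1 δ hδ).and
      (Metric.tendsto_nhds.1 (hconv p hp).2 δ hδ)
  filter_upwards [hgrid, Metric.tendstoUniformlyOn_iff.1 hmean δ hδ] with n hn hmean_n t ht
  obtain ⟨p, hp, hpt, htU⟩ := h𝓑.exists_mem t ht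
  have hLt : Iic p.1 ⊆ Iic t := Iic_subset_Iic.2 hpt
  have hmean_p : |M n (Iic p.1) - H (Iic p.1)| < δ := by
    simpa [Real.dist_eq, abs_sub_comm] using hmean_n p.1 (h𝓑.le_fst p hp)
  have hM_width : M n p.2 - M n (Iic p.1) ≤ ε :=
    (hM n _ _ measurableSet_Iic (h𝓑.measurableSet_snd p hp) (hLt.trans htU)).trans
      (h𝓑.measureReal_sdiff_le p hp)
  have hH_width : H (Iic t) - H (Iic p.1) ≤ ε := (hH' _ _).trans <|
    (measureReal_mono (sdiff_subset_sdiff_left htU)).trans (h𝓑.measureReal_sdiff_le p hp)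
  have hE_le := hE n hLt
  have hE_le' := hE n htU
  have hH_le := hH hLt
  obtain ⟨hL, hU⟩ := hn p hp
  rw [abs_lt] at hL hU hmean_p ⊢
  constructor <;> linarith [hL.1, hL.2, hU.1, hU.2, hmean_p.1, hmean_p.2]

theorem tendstoUniformlyOn_of_isHalfLineBracketing {ε : ℕ → ℝ} (hε : Tendsto ε atTop (𝓝 0))
    {𝓑 : ℕ → Finset (ℝ × Set ℝ)} (h𝓑 : ∀ m, IsHalfLineBracketing ν (ε m) a (𝓑 m))
    (hE : ∀ n, Monotone (E n))
    (hM : ∀ n B B', MeasurableSet B → MeasurableSet B' → B ⊆ B' → M n B' - M n B ≤ ν.real (B' \ B))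
    (hH : Monotone H) (hH' : ∀ B B', H B' - H B ≤ ν.real (B' \ B))
    (hmean : TendstoUniformlyOn (fun n t => M n (Iic t)) (fun t => H (Iic t)) atTop (Ici a))
    (hconv : ∀ m, ∀ p ∈ 𝓑 m, Tendsto (fun n => E n (Iic p.1) - M n (Iic p.1)) atTop (𝓝 0) ∧
      Tendsto (fun n => E n p.2 - M n p.2) atTop (𝓝 0)) :
    TendstoUniformlyOn (fun n t => E n (Iic t)) (fun t => H (Iic t)) atTop (Ici a) := by
  refine Metric.tendstoUniformlyOn_iff.2 fun η hη => ?_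
  obtain ⟨m, hm⟩ := (hε.eventually (gt_mem_nhds (half_pos hη))).exists
  filter_upwards [(h𝓑 m).eventually_abs_sub_lt hE hM hH hH' hmean (hconv m)
    (by positivity : 0 < η / 4)] with n hn t ht
  rw [dist_comm, Real.dist_eq]
  linarith [hn t ht]

end Deterministic

section iSup

variable {ι α : Type*} {l : Filter ι} {F : ι → α → ℝ} {f : α → ℝ} {s : Set α}

lemma TendstoUniformlyOn.tendsto_iSup_abs_sub (h : TendstoUniformlyOn F f l s) :
    Tendsto (fun n => ⨆ t ∈ s, |F n t - f t|) l (𝓝 0) := by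
  have hnonneg (n : ι) : 0 ≤ ⨆ t ∈ s, |F n t - f t| :=
    Real.iSup_nonneg fun t => Real.iSup_nonneg fun _ => abs_nonneg _
  refine tendsto_order.2 ⟨fun c hc => Eventually.of_forall fun n => hc.trans_le (hnonneg n),
    fun c hc => ?_⟩
  filter_upwards [Metric.tendstoUniformlyOn_iff.1 h (c / 2) (half_pos hc)] with n hn
  refine (Real.iSup_le (fun t => Real.iSup_le (fun ht => ?_) (half_pos hc).le)
    (half_pos hc).le).trans_lt (half_lt_self hc)
  rw [abs_sub_comm, ← Real.dist_eq]
  exact (hn t ht).le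

lemma tendstoUniformlyOn_of_tendsto_iSup_abs_sub {C : ℝ} (hC : ∀ n, ∀ t ∈ s, |F n t - f t| ≤ C)
    (h : Tendsto (fun n => ⨆ t ∈ s, |F n t - f t|) l (𝓝 0)) : TendstoUniformlyOn F f l s := by
  refine Metric.tendstoUniformlyOn_iff.2 fun δ hδ => ?_
  filter_upwards [h.eventually (gt_mem_nhds hδ)] with n hn t ht
  have hbdd : BddAbove (range fun t => ⨆ _ : t ∈ s, |F n t - f t|) := by
    refine ⟨max C 0, forall_mem_range.2 fun t => Real.iSup_le (fun ht => ?_) (le_max_right _ _)⟩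
    exact (hC n t ht).trans (le_max_left _ _)
  have : Nonempty (t ∈ s) := ⟨ht⟩
  calc dist (f t) (F n t) = ⨆ _ : t ∈ s, |F n t - f t| := by
        rw [ciSup_const, Real.dist_eq, abs_sub_comm]
    _ ≤ ⨆ t ∈ s, |F n t - f t| := le_ciSup hbdd t
    _ < δ := hn

end iSup

section WeightedEmpirical

lemma inv_mul_sum_range_le {n : ℕ} {f : ℕ → ℝ} {c : ℝ} (hf : ∀ i < n, f i ≤ c) (hc : 0 ≤ c) :
    (n : ℝ)⁻¹ * ∑ i ∈ Finset.range n, f i ≤ c := by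
  rcases n.eq_zero_or_pos with rfl | hn
  · simpa using hc
  rw [inv_mul_le_iff₀ (by positivity)]
  calc ∑ i ∈ Finset.range n, f i ≤ ∑ _i ∈ Finset.range n, c :=
        Finset.sum_le_sum fun i hi => hf i (Finset.mem_range.1 hi)
    _ = n * c := by simp

variable {Ω : Type*} {W : ℕ → Ω → ℝ} {η : ℕ → ℕ → Ω → ℝ}

noncomputable def weightedEmpirical (W : ℕ → Ω → ℝ) (η : ℕ → ℕ → Ω → ℝ) (n : ℕ) (B : Set ℝ)
    (ω : Ω) : ℝ :=
  (n : ℝ)⁻¹ * ∑ i ∈ Finset.range n, (W i ⁻¹' B).indicator (η n i) ω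

lemma weightedEmpirical_Iic (n : ℕ) (t : ℝ) (ω : Ω) :
    weightedEmpirical W η n (Iic t) ω =
      (n : ℝ)⁻¹ * ∑ i ∈ Finset.range n, if W i ω ≤ t then η n i ω else 0 := by
  simp only [weightedEmpirical, indicator, mem_preimage, mem_Iic]

lemma monotone_weightedEmpirical (hη : ∀ n i ω, 0 ≤ η n i ω) (n : ℕ) (ω : Ω) :
    Monotone fun B => weightedEmpirical W η n B ω := fun _ _ h =>
  mul_le_mul_of_nonneg_left (Finset.sum_le_sum fun i _ =>
    indicator_le_indicator_of_subset (preimage_mono h) (hη n i) ω) (by positivity)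

lemma indicator_preimage_mem_Icc (hη : ∀ n i ω, η n i ω ∈ Icc (0 : ℝ) 1) (n i : ℕ) (B : Set ℝ)
    (ω : Ω) : (W i ⁻¹' B).indicator (η n i) ω ∈ Icc (0 : ℝ) 1 := by
  by_cases h : ω ∈ W i ⁻¹' B
  · simpa [h] using hη n i ω
  · simp [h]

lemma weightedEmpirical_mem_Icc (hη : ∀ n i ω, η n i ω ∈ Icc (0 : ℝ) 1) (n : ℕ) (B : Set ℝ)
    (ω : Ω) : weightedEmpirical W η n B ω ∈ Icc (0 : ℝ) 1 :=
  ⟨mul_nonneg (by positivity)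
      (Finset.sum_nonneg fun i _ => (indicator_preimage_mem_Icc hη n i B ω).1),
    inv_mul_sum_range_le (fun i _ => (indicator_preimage_mem_Icc hη n i B ω).2) zero_le_one⟩

variable [MeasurableSpace Ω] {P : Measure Ω}

lemma integrable_indicator_preimage [IsFiniteMeasure P] (hW : ∀ i, Measurable (W i))
    (hηm : ∀ n i, Measurable (η n i)) (hη : ∀ n i ω, η n i ω ∈ Icc (0 : ℝ) 1) (n i : ℕ)
    {B : Set ℝ} (hB : MeasurableSet B) :
    Integrable ((W i ⁻¹' B).indicator (η n i)) P :=
  (Integrable.of_mem_Icc 0 1 (hηm n i).aemeasurable (ae_of_all _ (hη n i))).indicator (hW i hB)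

lemma integral_weightedEmpirical [IsFiniteMeasure P] (hW : ∀ i, Measurable (W i))
    (hηm : ∀ n i, Measurable (η n i)) (hη : ∀ n i ω, η n i ω ∈ Icc (0 : ℝ) 1) (n : ℕ)
    {B : Set ℝ} (hB : MeasurableSet B) :
    ∫ ω, weightedEmpirical W η n B ω ∂P =
      (n : ℝ)⁻¹ * ∑ i ∈ Finset.range n, ∫ ω, (W i ⁻¹' B).indicator (η n i) ω ∂P := by
  rw [← integral_finsetSum _ fun i _ => integrable_indicator_preimage hW hηm hη n i hB,
    ← integral_const_mul]
  rfl

lemma integral_weightedEmpirical_mem_Icc [IsProbabilityMeasure P]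
    (hη : ∀ n i ω, η n i ω ∈ Icc (0 : ℝ) 1) (n : ℕ) (B : Set ℝ) :
    ∫ ω, weightedEmpirical W η n B ω ∂P ∈ Icc (0 : ℝ) 1 := by
  have h := weightedEmpirical_mem_Icc (W := W) hη n B
  refine ⟨integral_nonneg fun ω => (h ω).1, ?_⟩
  calc ∫ ω, weightedEmpirical W η n B ω ∂P ≤ ∫ _, (1 : ℝ) ∂P :=
        integral_mono_of_nonneg (ae_of_all _ fun ω => (h ω).1) (integrable_const 1)
          (ae_of_all _ fun ω => (h ω).2)
    _ = 1 := by simp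

lemma integral_weightedEmpirical_sub_le [IsFiniteMeasure P] (hW : ∀ i, Measurable (W i))
    (hident : ∀ i, P.map (W i) = P.map (W 0)) (hηm : ∀ n i, Measurable (η n i))
    (hη : ∀ n i ω, η n i ω ∈ Icc (0 : ℝ) 1) (n : ℕ) {B B' : Set ℝ} (hB : MeasurableSet B)
    (hB' : MeasurableSet B') (hBB' : B ⊆ B') :
    ∫ ω, weightedEmpirical W η n B' ω ∂P - ∫ ω, weightedEmpirical W η n B ω ∂P ≤
      (P.map (W 0)).real (B' \ B) := by
  rw [integral_weightedEmpirical hW hηm hη n hB', integral_weightedEmpirical hW hηm hη n hB,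
    ← mul_sub, ← Finset.sum_sub_distrib]
  refine inv_mul_sum_range_le (fun i _ => ?_) measureReal_nonneg
  have hsdiff (ω : Ω) : (W i ⁻¹' B').indicator (η n i) ω - (W i ⁻¹' B).indicator (η n i) ω =
      (W i ⁻¹' (B' \ B)).indicator (η n i) ω := by
    rw [preimage_sdiff, indicator_sdiff (preimage_mono hBB')]
    rfl
  rw [← integral_sub (integrable_indicator_preimage hW hηm hη n i hB')
    (integrable_indicator_preimage hW hηm hη n i hB)]
  simp_rw [hsdiff]
  rw [← hident i, map_measureReal_apply (hW i) (hB'.diff hB),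
    ← integral_indicator_one (hW i (hB'.diff hB))]
  refine integral_mono (integrable_indicator_preimage hW hηm hη n i (hB'.diff hB))
    ((integrable_const 1).indicator (hW i (hB'.diff hB))) fun ω => ?_
  exact indicator_le_indicator (hη n i ω).2

lemma ae_tendsto_weightedEmpirical_sub_integral [IsProbabilityMeasure P]
    (hW : ∀ i, Measurable (W i)) (hηm : ∀ n i, Measurable (η n i))
    (hη : ∀ n i ω, η n i ω ∈ Icc (0 : ℝ) 1)
    (hindep : ∀ n, iIndepFun (fun i ω => (W i ω, η n i ω)) P) {B : Set ℝ} (hB : MeasurableSet B) :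
    ∀ᵐ ω ∂P, Tendsto
      (fun n => weightedEmpirical W η n B ω - ∫ ω', weightedEmpirical W η n B ω' ∂P)
      atTop (𝓝 0) := by
  have hZ := ae_tendsto_inv_mul_sum_sub_integral (μ := P)
    (Z := fun n i => (W i ⁻¹' B).indicator (η n i))
    (fun n i => ((hηm n i).indicator (hW i hB)).aemeasurable)
    (fun n i => ae_of_all _ (indicator_preimage_mem_Icc hη n i B))
    (fun n => (hindep n).comp (fun _ p => (Prod.fst ⁻¹' B).indicator Prod.snd p)
      fun _ => measurable_snd.indicator (measurable_fst hB))
  filter_upwards [hZ] with ω hω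
  refine hω.congr fun n => ?_
  rw [integral_weightedEmpirical hW hηm hη n hB, weightedEmpirical, Finset.sum_sub_distrib, mul_sub]

end WeightedEmpirical

lemma measureReal_preimage_inter_sub_le {Ω : Type*} [MeasurableSpace Ω] {P : Measure Ω}
    [IsFiniteMeasure P] {Y : Ω → ℝ} (hY : AEMeasurable Y P) (A : Set Ω) (B B' : Set ℝ) :
    P.real (Y ⁻¹' B' ∩ A) - P.real (Y ⁻¹' B ∩ A) ≤ (P.map Y).real (B' \ B) := by
  have hcover : Y ⁻¹' B' ∩ A ⊆ (Y ⁻¹' B ∩ A) ∪ Y ⁻¹' (B' \ B) := fun ω ⟨hB', hA⟩ => by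
    by_cases hB : Y ω ∈ B
    exacts [Or.inl ⟨hB, hA⟩, Or.inr ⟨hB', hB⟩]
  have := (measureReal_mono (μ := P) hcover).trans (measureReal_union_le _ _)
  have := ENNReal.toReal_mono (measure_ne_top _ _) (Measure.le_map_apply hY (B' \ B))
  rw [← measureReal_def, ← measureReal_def] at this
  linarith

theorem crude_expert_subdistribution_consistency_general
    {Ω : Type*} [MeasurableSpace Ω] (P : Measure Ω) [IsProbabilityMeasure P]
    (W : ℕ → Ω → ℝ) (X : ℕ → Ω → ℝ) (η : ℕ → ℕ → Ω → ℝ)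
    (hWmeas : ∀ i, Measurable (W i))
    (hηmeas : ∀ n i, Measurable (η n i))
    (hη01 : ∀ n i ω, η n i ω ∈ Icc (0 : ℝ) 1)
    (hWident : ∀ i, Measure.map (W i) P = Measure.map (W 0) P)
    -- within each row, the pairs `(W i, η n i)` are mutually independent
    (hrowindep : ∀ n, iIndepFun
      (fun i ω => (W i ω, η n i ω)) P)
    (H₁ : ℝ → ℝ)
    (hH₁ : ∀ t, H₁ t = (P {ω | W 0 ω ≤ t ∧ W 0 ω = X 0 ω}).toReal)
    -- assumption (3.1): uniform convergence of the row means
    (hmean : Tendsto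
      (fun n : ℕ => ⨆ t ∈ Ici (0 : ℝ),
        |(n : ℝ)⁻¹ * ∑ i ∈ Finset.range n,
            ∫ ω, (if W i ω ≤ t then η n i ω else 0) ∂P - H₁ t|)
      atTop (𝓝 0)) :
    ∀ᵐ ω ∂P, Tendsto
      (fun n : ℕ => ⨆ t ∈ Ici (0 : ℝ),
        |(n : ℝ)⁻¹ * ∑ i ∈ Finset.range n,
            (if W i ω ≤ t then η n i ω else 0) - H₁ t|)
      atTop (𝓝 0) := by
  have := Measure.isProbabilityMeasure_map (μ := P) (hWmeas 0).aemeasurable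
  set H : Set ℝ → ℝ := fun B => P.real (W 0 ⁻¹' B ∩ {ω | W 0 ω = X 0 ω})
  have hH₁_eq (t : ℝ) : H₁ t = H (Iic t) := hH₁ t
  have hmean' : TendstoUniformlyOn (fun n t => ∫ ω, weightedEmpirical W η n (Iic t) ω ∂P)
      (fun t => H (Iic t)) atTop (Ici 0) := by
    refine tendstoUniformlyOn_of_tendsto_iSup_abs_sub (C := 1) (fun n t _ => ?_) ?_
    · have h := integral_weightedEmpirical_mem_Icc (P := P) (W := W) hη01 n (Iic t)
      exact abs_sub_le_of_nonneg_of_le h.1 h.2 measureReal_nonneg measureReal_le_one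
    · simpa only [integral_weightedEmpirical hWmeas hηmeas hη01 _ measurableSet_Iic, indicator,
        mem_preimage, mem_Iic, hH₁_eq] using hmean
  choose 𝓑 h𝓑 using fun m : ℕ =>
    exists_isHalfLineBracketing (P.map (W 0)) (Nat.one_div_pos_of_nat (n := m)) 0
  have hslln {B : Set ℝ} (hB : MeasurableSet B) :=
    ae_tendsto_weightedEmpirical_sub_integral hWmeas hηmeas hη01 hrowindep hB
  filter_upwards [ae_all_iff.2 fun m => (eventually_all_finset (𝓑 m)).2 fun p hp =>
    (hslln measurableSet_Iic).and (hslln ((h𝓑 m).measurableSet_snd p hp))] with ω hω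
  have := tendstoUniformlyOn_of_isHalfLineBracketing tendsto_one_div_add_atTop_nhds_zero_nat h𝓑
    (fun n => monotone_weightedEmpirical (fun n i ω => (hη01 n i ω).1) n ω)
    (fun n _ _ => integral_weightedEmpirical_sub_le hWmeas hWident hηmeas hη01 n)
    (fun _ _ h => measureReal_mono (μ := P) (inter_subset_inter_left _ (preimage_mono h)))
    (measureReal_preimage_inter_sub_le (hWmeas 0).aemeasurable _) hmean' hω
  simpa only [weightedEmpirical_Iic, hH₁_eq] using this.tendsto_iSup_abs_sub

/-- Lemma 3.1 of the paper. If the row means of the expert-weighted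
empirical sub-distribution functions converge uniformly to `H₁`, then the expert-weighted
empirical sub-distribution functions converge uniformly to `H₁` almost surely. -/
theorem crude_expert_subdistribution_consistency
    {Ω : Type*} [MeasurableSpace Ω] (P : Measure Ω) [IsProbabilityMeasure P]
    (W : ℕ → Ω → ℝ) (X : ℕ → Ω → ℝ) (η : ℕ → ℕ → Ω → ℝ)
    (hWmeas : ∀ i, Measurable (W i)) (hXmeas : ∀ i, Measurable (X i))
    (hWnn : ∀ i ω, 0 ≤ W i ω)
    (hηmeas : ∀ n i, Measurable (η n i))
    (hη01 : ∀ n i ω, η n i ω ∈ Icc (0 : ℝ) 1)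
    -- the `W i` are iid
    (hWiid : iIndepFun W P)
    (hWident : ∀ i, Measure.map (W i) P = Measure.map (W 0) P)
    -- within each row, the pairs `(W i, η n i)` are mutually independent
    (hrowindep : ∀ n, iIndepFun
      (fun i ω => (W i ω, η n i ω)) P)
    (H₁ : ℝ → ℝ)
    (hH₁ : ∀ t, H₁ t = (P {ω | W 0 ω ≤ t ∧ W 0 ω = X 0 ω}).toReal)
    -- assumption (3.1): uniform convergence of the row means
    (hmean : Tendsto
      (fun n : ℕ => ⨆ t ∈ Ici (0 : ℝ),
        |(n : ℝ)⁻¹ * ∑ i ∈ Finset.range n,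
            ∫ ω, (if W i ω ≤ t then η n i ω else 0) ∂P - H₁ t|)
      atTop (𝓝 0)) :
    ∀ᵐ ω ∂P, Tendsto
      (fun n : ℕ => ⨆ t ∈ Ici (0 : ℝ),
        |(n : ℝ)⁻¹ * ∑ i ∈ Finset.range n,
            (if W i ω ≤ t then η n i ω else 0) - H₁ t|)
      atTop (𝓝 0) :=
  crude_expert_subdistribution_consistency_general P W X η hWmeas hηmeas hη01 hWident hrowindep H₁
    hH₁ hmean
end

section
/- Let X, Y, C be mutually independent with W = X ∧ Y ∧ C, δ = 1_{W = X ∧ Y}, G the cdf of C, and F the cdf of X. Then for every t ≥ 0 with G(t−) < 1, E[1_{X ≤ t} · δ / (1 − G(W−))] = F(t). -/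
open MeasureTheory ProbabilityTheory Filter Set Function
open scoped Topology ENNReal

/-!
Condition on the uncensored pair `V = (X, Y)`. By independence, `C` keeps its law `μ` given `V`,
so the observation event `{min X Y ≤ C}` has conditional probability
`μ [min X Y, ∞) = 1 - G(min X Y −)`, exactly the weight it is divided by. The inner integral
over `C` is therefore `1` on `{X ≤ t}`, and integrating over `V` leaves `P (X ≤ t) = F t`.
The assumption `G(t−) < 1` bounds the weights by `(1 - G(t−))⁻¹`, which makes Fubini applicable.
-/

lemma measureReal_Ici_eq_one_sub_leftLim_cdf (μ : Measure ℝ) [IsProbabilityMeasure μ] (x : ℝ) :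
    μ.real (Ici x) = 1 - leftLim (cdf μ) x := by
  have hIci := (cdf μ).measure_Ici (tendsto_cdf_atTop μ) x
  rw [measure_cdf] at hIci
  rw [measureReal_def, hIci, ENNReal.toReal_ofReal (sub_nonneg.2 ?_)]
  exact (monotone_cdf μ).leftLim_le le_rfl |>.trans (cdf_le_one μ x)

section InverseCensoringWeight

variable {β : Type*}

open Classical in
/-- Inverse-probability-of-censoring weight: the event time `m v` is observed when it precedes
the censoring time `c`, which has law `μ`; observed cases with `v ∈ s` are weighted by the inverse
of the probability `μ [m v, ∞)` of being observed. -/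
noncomputable def censoringWeight (μ : Measure ℝ) (s : Set β) (m : β → ℝ) (v : β) (c : ℝ) : ℝ :=
  if v ∈ s ∧ m v ≤ c then (μ.real (Ici (m v)))⁻¹ else 0

variable {μ : Measure ℝ} {s : Set β} {m : β → ℝ}

lemma norm_censoringWeight_le {ε : ℝ} (hε : 0 < ε) (hεs : ∀ v ∈ s, ε ≤ μ.real (Ici (m v)))
    (v : β) (c : ℝ) : ‖censoringWeight μ s m v c‖ ≤ ε⁻¹ := by
  unfold censoringWeight
  split_ifs with h
  · have := hεs v h.1
    rw [Real.norm_of_nonneg (inv_nonneg.2 (hε.le.trans this))]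
    exact inv_anti₀ hε this
  · simpa using hε.le

lemma integral_censoringWeight [IsProbabilityMeasure μ]
    (hμs : ∀ v ∈ s, μ.real (Ici (m v)) ≠ 0) (v : β) :
    ∫ c, censoringWeight μ s m v c ∂μ = s.indicator 1 v := by
  by_cases hv : v ∈ s
  · have hsection : censoringWeight μ s m v = (Ici (m v)).indicator fun _ => (μ.real (Ici (m v)))⁻¹ := by
      ext c
      simp [censoringWeight, hv, indicator]
    rw [hsection, integral_indicator_const _ measurableSet_Ici, smul_eq_mul,
      mul_inv_cancel₀ (hμs v hv), indicator_of_mem hv, Pi.one_apply]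
  · simp [censoringWeight, hv]

variable [MeasurableSpace β]

lemma measurable_censoringWeight [IsFiniteMeasure μ] (hs : MeasurableSet s) (hm : Measurable m) :
    Measurable (uncurry (censoringWeight μ s m)) := by
  have hreal : Measurable fun r => μ.real (Ici r) :=
    Antitone.measurable fun a b hab => measureReal_mono (Ici_subset_Ici.2 hab)
  exact Measurable.ite ((measurable_fst hs).inter (measurableSet_le (hm.comp measurable_fst)
    measurable_snd)) ((hreal.comp (hm.comp measurable_fst)).inv) measurable_const

theorem integral_censoringWeight_of_indepFun {Ω : Type*} [MeasurableSpace Ω] {P : Measure Ω}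
    [IsProbabilityMeasure P] {V : Ω → β} {C : Ω → ℝ} (hV : Measurable V) (hC : Measurable C)
    (hVC : IndepFun V C P) (hs : MeasurableSet s) (hm : Measurable m) {ε : ℝ} (hε : 0 < ε)
    (hεs : ∀ v ∈ s, ε ≤ (P.map C).real (Ici (m v))) :
    ∫ ω, censoringWeight (P.map C) s m (V ω) (C ω) ∂P = P.real (V ⁻¹' s) := by
  have : IsProbabilityMeasure (P.map C) := Measure.isProbabilityMeasure_map hC.aemeasurable
  have : IsProbabilityMeasure (P.map V) := Measure.isProbabilityMeasure_map hV.aemeasurable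
  have hw := measurable_censoringWeight (μ := P.map C) hs hm
  have hjoint : P.map (fun ω => (V ω, C ω)) = (P.map V).prod (P.map C) :=
    (indepFun_iff_map_prod_eq_prod_map_map hV.aemeasurable hC.aemeasurable).1 hVC
  have hint : Integrable (uncurry (censoringWeight (P.map C) s m)) ((P.map V).prod (P.map C)) :=
    (integrable_const ε⁻¹).mono' hw.aestronglyMeasurable
      (.of_forall fun p => norm_censoringWeight_le hε hεs p.1 p.2)
  calc ∫ ω, censoringWeight (P.map C) s m (V ω) (C ω) ∂P
      = ∫ p, uncurry (censoringWeight (P.map C) s m) p ∂(P.map fun ω => (V ω, C ω)) :=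
        (integral_map (hV.prodMk hC).aemeasurable hw.aestronglyMeasurable).symm
    _ = ∫ v, ∫ c, censoringWeight (P.map C) s m v c ∂(P.map C) ∂(P.map V) := by
        rw [hjoint, integral_prod _ hint]
        rfl
    _ = ∫ v, s.indicator 1 v ∂(P.map V) := by
        congr 1 with v
        exact integral_censoringWeight (fun v hv => (hε.trans_le (hεs v hv)).ne') v
    _ = P.real (V ⁻¹' s) := by
        rw [integral_indicator_one hs, map_measureReal_apply hV hs]

end InverseCensoringWeight

theorem ipcw_unbiasedness_general
    {Ω : Type*} [MeasurableSpace Ω] (P : Measure Ω) [IsProbabilityMeasure P]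
    (X Y C : Ω → ℝ)
    (hX : Measurable X) (hY : Measurable Y) (hC : Measurable C)
    (hindep : iIndepFun ![X, Y, C] P)
    (G : ℝ → ℝ) (hG : ∀ t, G t = (P {ω | C ω ≤ t}).toReal)
    (F : ℝ → ℝ) (hF : ∀ t, F t = (P {ω | X ω ≤ t}).toReal)
    (W : Ω → ℝ) (hW : ∀ ω, W ω = min (min (X ω) (Y ω)) (C ω))
    (δ : Ω → ℝ) (hδ : ∀ ω, δ ω = if min (X ω) (Y ω) ≤ C ω then 1 else 0) :
    ∀ t, 0 ≤ t → leftLim G t < 1 →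
      ∫ ω, (if X ω ≤ t then δ ω / (1 - leftLim G (W ω)) else 0) ∂P = F t := by
  intro t _ hGt
  have : IsProbabilityMeasure (P.map C) := Measure.isProbabilityMeasure_map hC.aemeasurable
  have hG_cdf : G = cdf (P.map C) := funext fun x => by
    rw [hG, cdf_eq_real, map_measureReal_apply hC measurableSet_Iic]
    rfl
  have hsurv (x : ℝ) : 1 - leftLim G x = (P.map C).real (Ici x) := by
    rw [hG_cdf, measureReal_Ici_eq_one_sub_leftLim_cdf]
  have hVC : IndepFun (fun ω => (X ω, Y ω)) C P := by
    simpa using hindep.indepFun_prodMk (fun i => by fin_cases i <;> assumption) 0 1 2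
      (by decide) (by decide)
  have hintegrand (ω : Ω) : (if X ω ≤ t then δ ω / (1 - leftLim G (W ω)) else 0) =
      censoringWeight (P.map C) {v | v.1 ≤ t} (fun v => min v.1 v.2) (X ω, Y ω) (C ω) := by
    by_cases hobs : min (X ω) (Y ω) ≤ C ω
    · simp [censoringWeight, hδ, hW, hobs, hsurv]
    · simp [censoringWeight, hδ, hobs]
  have hweight_bound (v : ℝ × ℝ) (hv : v.1 ≤ t) :
      1 - leftLim G t ≤ (P.map C).real (Ici (min v.1 v.2)) :=
    (hsurv t).trans_le (measureReal_mono (Ici_subset_Ici.2 (min_le_of_left_le hv)))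
  simp_rw [hintegrand]
  rw [integral_censoringWeight_of_indepFun (hX.prodMk hY) hC hVC
    (measurableSet_le measurable_fst measurable_const) (measurable_fst.min measurable_snd)
    (sub_pos.2 hGt) hweight_bound, hF]
  rfl

/-- With `X, Y, C` mutually independent, `W = X ∧ Y ∧ C`,
`δ = 1_{W = X ∧ Y}`, `G` the cdf of `C` and `F` the cdf of `X`, for every `t ≥ 0` with
`G(t−) < 1` one has `E[1_{X ≤ t} δ / (1 − G(W−))] = F(t)`. -/
theorem ipcw_unbiasedness
    {Ω : Type*} [MeasurableSpace Ω] (P : Measure Ω) [IsProbabilityMeasure P]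
    (X Y C : Ω → ℝ)
    (hX : Measurable X) (hY : Measurable Y) (hC : Measurable C)
    (hXnn : ∀ ω, 0 ≤ X ω) (hYnn : ∀ ω, 0 ≤ Y ω) (hCnn : ∀ ω, 0 ≤ C ω)
    (hindep : iIndepFun ![X, Y, C] P)
    (G : ℝ → ℝ) (hG : ∀ t, G t = (P {ω | C ω ≤ t}).toReal)
    (F : ℝ → ℝ) (hF : ∀ t, F t = (P {ω | X ω ≤ t}).toReal)
    (W : Ω → ℝ) (hW : ∀ ω, W ω = min (min (X ω) (Y ω)) (C ω))
    (δ : Ω → ℝ) (hδ : ∀ ω, δ ω = if min (X ω) (Y ω) ≤ C ω then 1 else 0) :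
    ∀ t, 0 ≤ t → leftLim G t < 1 →
      ∫ ω, (if X ω ≤ t then δ ω / (1 - leftLim G (W ω)) else 0) ∂P = F t :=
  ipcw_unbiasedness_general P X Y C hX hY hC hindep G hG F hF W hW δ hδ
end

section
/- Under entirely random right-censoring (X independent of C), with F, G, H the cdfs of X, C, W = X ∧ C respectively, it holds that (1 − F(t))(1 − G(t)) = 1 − H(t) for all t ≥ 0, and F(t) = ∫_{[0,t]} (1 − G(s−))^{-1} dH_1(s) for all 0 ≤ t < G^{-1}(1), where H_1(t) = P(W ≤ t, W = X). -/
open MeasureTheory ProbabilityTheory Filter Set Function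
open scoped Topology ENNReal

/-!
Independence makes the law of `(X, C)` a product measure. Both identities are then computations
in that product: `{W > t} = {X > t} ∩ {C > t}` gives the first one, and Fubini gives
`H₁(dx) = P(C ≥ x) F(dx)` with `P(C ≥ x) = 1 - G(x-)`. Below `G⁻¹(1)` this density is positive,
so dividing by it recovers `F` on `[0, t]`, which carries all of `F(t)` because `X ≥ 0`.
-/

lemma ProbabilityTheory.measure_Ici_eq_ofReal_one_sub_leftLim_cdf (μ : Measure ℝ)
    [IsProbabilityMeasure μ] (x : ℝ) : μ (Ici x) = ENNReal.ofReal (1 - leftLim (cdf μ) x) := by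
  conv_lhs => rw [← measure_cdf μ]
  exact (cdf μ).measure_Ici (tendsto_cdf_atTop μ) x

lemma ProbabilityTheory.cdf_map_eq {Ω : Type*} [MeasurableSpace Ω] (P : Measure Ω)
    [IsProbabilityMeasure P] {X : Ω → ℝ} (hX : Measurable X) :
    cdf (P.map X) = fun t => P.real {ω | X ω ≤ t} := by
  have := Measure.isProbabilityMeasure_map (μ := P) hX.aemeasurable
  ext t
  rw [cdf_eq_real, map_measureReal_apply hX measurableSet_Iic]
  rfl

lemma MeasureTheory.setIntegral_inv_toReal_withDensity {α : Type*} [MeasurableSpace α]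
    {μ : Measure α} {ρ : α → ℝ≥0∞} (hρ : Measurable ρ) {s : Set α} (hs : MeasurableSet s)
    (hρ_zero : ∀ x ∈ s, ρ x ≠ 0) (hρ_top : ∀ x ∈ s, ρ x ≠ ∞) :
    ∫ x in s, (ρ x).toReal⁻¹ ∂μ.withDensity ρ = μ.real s := by
  rw [setIntegral_withDensity_eq_setIntegral_toReal_smul hρ
    ((ae_restrict_iff' hs).2 (Eventually.of_forall fun x hx => (hρ_top x hx).lt_top)) _ hs,
    setIntegral_congr_fun hs (g := fun _ => (1 : ℝ)) fun x hx => (smul_eq_mul _ _).trans <|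
      mul_inv_cancel₀ (ENNReal.toReal_ne_zero.2 ⟨hρ_zero x hx, hρ_top x hx⟩),
    setIntegral_const, smul_eq_mul, mul_one]

section Censoring

variable {Ω α : Type*} [MeasurableSpace Ω] {P : Measure Ω} [LinearOrder α] [TopologicalSpace α]
  [OrderClosedTopology α] [MeasurableSpace α] [OpensMeasurableSpace α]
  {X C : Ω → α}

lemma ProbabilityTheory.IndepFun.measure_lt_min (hindep : IndepFun X C P) (t : α) :
    P {ω | t < min (X ω) (C ω)} = P {ω | t < X ω} * P {ω | t < C ω} := by
  simp only [lt_min_iff]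
  exact hindep.measure_inter_preimage_eq_mul (Ioi t) (Ioi t) measurableSet_Ioi measurableSet_Ioi

theorem ProbabilityTheory.IndepFun.map_min_restrict_le_eq_withDensity [IsFiniteMeasure P]
    [SecondCountableTopology α]
    (hX : Measurable X) (hC : Measurable C) (hindep : IndepFun X C P) :
    (P.restrict {ω | X ω ≤ C ω}).map (fun ω => min (X ω) (C ω))
      = (P.map X).withDensity fun x => P.map C (Ici x) := by
  ext A hA
  set S : Set (α × α) := {p | p.1 ∈ A ∧ p.1 ≤ p.2}
  have hS : MeasurableSet S :=
    (measurable_fst hA).inter (measurableSet_le measurable_fst measurable_snd)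
  have hpre :
      (fun ω => min (X ω) (C ω)) ⁻¹' A ∩ {ω | X ω ≤ C ω} = (fun ω => (X ω, C ω)) ⁻¹' S := by
    ext ω
    simp only [S, mem_inter_iff, mem_preimage, mem_ofPred_eq]
    constructor
    · rintro ⟨hA, hle⟩; exact ⟨min_eq_left hle ▸ hA, hle⟩
    · rintro ⟨hA, hle⟩; exact ⟨(min_eq_left hle).symm ▸ hA, hle⟩
  rw [Measure.map_apply (hX.min hC) hA, Measure.restrict_apply (hX.min hC hA), hpre,
    ← Measure.map_apply (hX.prodMk hC) hS,
    (indepFun_iff_map_prod_eq_prod_map_map hX.aemeasurable hC.aemeasurable).1 hindep,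
    Measure.prod_apply hS, withDensity_apply _ hA, ← lintegral_indicator hA]
  refine lintegral_congr fun x => ?_
  by_cases hx : x ∈ A
  · simp [S, hx, indicator_of_mem, Ici_def]
  · simp [S, hx]

end Censoring

/-- identities (2.3) and (2.5). Under entirely random right-censoring,
`(1 − F)(1 − G) = 1 − H`, and `F(t) = ∫_{[0,t]} (1 − G(s−))⁻¹ dH₁(s)` for `t < G⁻¹(1)`,
where `H₁(dt)` is the law of `W` restricted to `{W = X} = {X ≤ C}`. -/
theorem ipcw_representation_of_F
    {Ω : Type*} [MeasurableSpace Ω] (P : Measure Ω) [IsProbabilityMeasure P]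
    (X C : Ω → ℝ)
    (hX : Measurable X) (hC : Measurable C)
    (hXnn : ∀ ω, 0 ≤ X ω)
    -- entirely random right-censoring
    (hindep : IndepFun X C P)
    (F : ℝ → ℝ) (hF : ∀ t, F t = (P {ω | X ω ≤ t}).toReal)
    (G : ℝ → ℝ) (hG : ∀ t, G t = (P {ω | C ω ≤ t}).toReal)
    (H : ℝ → ℝ) (hH : ∀ t, H t = (P {ω | min (X ω) (C ω) ≤ t}).toReal) :
    (∀ t : ℝ, (1 - F t) * (1 - G t) = 1 - H t)
    ∧ (∀ t : ℝ, 0 ≤ t → G t < 1 →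
        F t = ∫ s in Icc (0 : ℝ) t, (1 - leftLim G s)⁻¹
          ∂(Measure.map (fun ω => min (X ω) (C ω)) (P.restrict {ω | X ω ≤ C ω}))) := by
  refine ⟨fun t => ?_, fun t _ hGt => ?_⟩
  · have survival {Y : Ω → ℝ} (hY : Measurable Y) :
        1 - (P {ω | Y ω ≤ t}).toReal = (P {ω | t < Y ω}).toReal := by
      rw [← measureReal_def, ← probReal_compl_eq_one_sub (measurableSet_le hY measurable_const)]
      simp only [compl_ofPred, not_le, measureReal_def]
    rw [hF, hG, hH, survival hX, survival hC, survival (hX.min hC), hindep.measure_lt_min,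
      ENNReal.toReal_mul]
  · have := Measure.isProbabilityMeasure_map (μ := P) hC.aemeasurable
    obtain rfl : G = cdf (P.map C) := funext fun s => by rw [hG, cdf_map_eq P hC]; rfl
    have hsurvC (s : ℝ) : (P.map C (Ici s)).toReal = 1 - leftLim (cdf (P.map C)) s := by
      rw [measure_Ici_eq_ofReal_one_sub_leftLim_cdf, ENNReal.toReal_ofReal
        (sub_nonneg.2 (((monotone_cdf _).leftLim_le le_rfl).trans (cdf_le_one _ s)))]
    have hsurvC_ne_zero : ∀ s ∈ Icc 0 t, P.map C (Ici s) ≠ 0 := fun s hs h0 => by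
      have hlt := ((monotone_cdf _).leftLim_le hs.2).trans_lt hGt
      have := hsurvC s
      rw [h0, ENNReal.toReal_zero] at this
      linarith
    simp_rw [← hsurvC]
    rw [hindep.map_min_restrict_le_eq_withDensity hX hC,
      setIntegral_inv_toReal_withDensity
        (Antitone.measurable fun a b hab => measure_mono (Ici_subset_Ici.2 hab))
        measurableSet_Icc hsurvC_ne_zero (fun _ _ => measure_ne_top _ _),
      map_measureReal_apply hX measurableSet_Icc, hF, measureReal_def]
    congr 2
    ext ω
    simp [hXnn ω]
end

section
/- Let Λ be a cumulative hazard function of a cdf F with F(θ) < 1 for some θ, and let Λ^{(n)} be nondecreasing right-continuous functions with sup_{0 ≤ t ≤ θ}|Λ^{(n)}(t) − Λ(t)| → 0. Then ∑_{0 ≤ t ≤ θ, ΔF(t) > 0} (ΔF(t)/(1 − F(t))) |ΔΛ^{(n)}(t) − ΔΛ(t)| ≤ (F(θ)/(1 − F(θ))) · (sup_{0 ≤ t ≤ θ}|Λ^{(n)}(t) − Λ(t)| + sup_{0 ≤ t ≤ θ}|Λ^{(n)}(t−) − Λ(t−)|), and in particular this sum tends to 0. -/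
open Filter Set Function
open scoped Topology ENNReal

namespace Monotone

variable {f g : ℝ → ℝ}

lemma sub_leftLim_nonneg (hf : Monotone f) (t : ℝ) : 0 ≤ f t - leftLim f t :=
  sub_nonneg.2 (hf.leftLim_le le_rfl)

lemma sum_sub_leftLim_le_leftLim (hf : Monotone f) (hf0 : ∀ t, 0 ≤ f t) (s : Finset ℝ) :
    ∀ b, ↑s ⊆ Iio b → ∑ t ∈ s, (f t - leftLim f t) ≤ leftLim f b := by
  induction s using Finset.induction_on_max with
  | empty => exact fun b _ => by simpa using (hf0 (b - 1)).trans (hf.le_leftLim (sub_one_lt b))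
  | insert m s hlt ih =>
    intro b hs
    have hmb : m < b := hs (Finset.mem_insert_self m s)
    have hsm : ∑ t ∈ s, (f t - leftLim f t) ≤ leftLim f m := ih m fun t ht => hlt t ht
    rw [Finset.sum_insert fun hm => (hlt m hm).false]
    linarith [hf.le_leftLim hmb]

lemma sum_sub_leftLim_le (hf : Monotone f) (hf0 : ∀ t, 0 ≤ f t) (s : Finset ℝ) {b : ℝ}
    (hs : ↑s ⊆ Iic b) : ∑ t ∈ s, (f t - leftLim f t) ≤ f b := by
  have hlt : ↑(s.erase b) ⊆ Iio b := fun t ht =>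
    lt_of_le_of_ne (hs (Finset.mem_of_mem_erase ht)) (Finset.ne_of_mem_erase ht)
  calc ∑ t ∈ s, (f t - leftLim f t)
      ≤ ∑ t ∈ insert b s, (f t - leftLim f t) :=
        Finset.sum_le_sum_of_subset_of_nonneg (Finset.subset_insert b s)
          fun t _ _ => hf.sub_leftLim_nonneg t
    _ = (f b - leftLim f b) + ∑ t ∈ s.erase b, (f t - leftLim f t) := by
        rw [← Finset.add_sum_erase _ _ (Finset.mem_insert_self b s), Finset.erase_insert_eq_erase]
    _ ≤ (f b - leftLim f b) + leftLim f b := by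
        gcongr; exact hf.sum_sub_leftLim_le_leftLim hf0 _ b hlt
    _ = f b := by ring

lemma abs_sub_le_of_mem_Icc (hf : Monotone f) (hg : Monotone g) {a b t : ℝ} (ht : t ∈ Icc a b) :
    |f t - g t| ≤ |f b - g a| + |g b - f a| := by
  have := hf ht.1; have := hf ht.2; have := hg ht.1; have := hg ht.2
  rw [abs_le]
  constructor <;> linarith [le_abs_self (f b - g a), le_abs_self (g b - f a),
    abs_nonneg (f b - g a), abs_nonneg (g b - f a)]

lemma abs_sub_le_biSup (hf : Monotone f) (hg : Monotone g) {a b t : ℝ} (ht : t ∈ Icc a b) :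
    |f t - g t| ≤ ⨆ u ∈ Icc a b, |f u - g u| := by
  refine le_ciSup₂ (f := fun u (_ : u ∈ Icc a b) => |f u - g u|)
    ⟨|f b - g a| + |g b - f a|, ?_⟩ t ht
  rintro _ ⟨_, ⟨u, rfl⟩, ⟨hu, rfl⟩⟩
  exact hf.abs_sub_le_of_mem_Icc hg hu

lemma abs_leftLim_sub_leftLim_le (hf : Monotone f) (hg : Monotone g) {t M : ℝ}
    (h : ∀ u < t, |f u - g u| ≤ M) : |leftLim f t - leftLim g t| ≤ M :=
  _root_.le_of_tendsto ((hf.tendsto_leftLim t).sub (hg.tendsto_leftLim t)).abs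
    (eventually_nhdsWithin_of_forall h)

/-- Left limits at `a` only see values below `a`, where `f` and `g` agree. -/
lemma biSup_abs_leftLim_sub_le (hf : Monotone f) (hg : Monotone g) {a b : ℝ}
    (hfg : ∀ t < a, f t = g t) :
    ⨆ t ∈ Icc a b, |leftLim f t - leftLim g t| ≤ ⨆ t ∈ Icc a b, |f t - g t| := by
  have hS : 0 ≤ ⨆ t ∈ Icc a b, |f t - g t| :=
    Real.iSup_nonneg fun _ => Real.iSup_nonneg fun _ => abs_nonneg _
  refine Real.iSup_le (fun t => Real.iSup_le (fun ht => ?_) hS) hS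
  refine hf.abs_leftLim_sub_leftLim_le hg fun u hut => ?_
  rcases lt_or_ge u a with hua | hau
  · simpa [hfg u hua] using hS
  · exact hf.abs_sub_le_biSup hg ⟨hau, hut.le.trans ht.2⟩

/-- On `[a, θ]` the weight `Δf(t)/(1 - f(t))` is at most `Δf(t)/(1 - f(θ))`, and the jumps
`Δf(t) = f t - leftLim f t` there add up to at most `f θ`. -/
lemma tsum_sub_leftLim_div_mul_le (hf : Monotone f) (hf0 : ∀ t, 0 ≤ f t) {a θ C : ℝ}
    (hfθ : f θ < 1) (hC : 0 ≤ C) (hgC : ∀ t ∈ Icc a θ, g t ≤ C) :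
    (∑' t : ℝ, if t ∈ Icc a θ then (f t - leftLim f t) / (1 - f t) * g t else 0)
      ≤ f θ / (1 - f θ) * C := by
  have hfθ' : 0 < 1 - f θ := sub_pos.2 hfθ
  have hterm : ∀ t, (if t ∈ Icc a θ then (f t - leftLim f t) / (1 - f t) * g t else 0)
      ≤ C / (1 - f θ) * (if t ∈ Icc a θ then f t - leftLim f t else 0) := by
    intro t
    split_ifs with ht
    · have hjump := hf.sub_leftLim_nonneg t
      have hft : 0 < 1 - f t := by linarith [hf ht.2]
      calc (f t - leftLim f t) / (1 - f t) * g t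
          ≤ (f t - leftLim f t) / (1 - f t) * C :=
            mul_le_mul_of_nonneg_left (hgC t ht) (div_nonneg hjump hft.le)
        _ ≤ (f t - leftLim f t) / (1 - f θ) * C := by
            gcongr; linarith [hf ht.2]
        _ = C / (1 - f θ) * (f t - leftLim f t) := by ring
    · simp
  refine tsum_le_of_sum_le' (mul_nonneg (div_nonneg (hf0 θ) hfθ'.le) hC) fun s => ?_
  calc ∑ t ∈ s, (if t ∈ Icc a θ then (f t - leftLim f t) / (1 - f t) * g t else 0)
      ≤ C / (1 - f θ) * ∑ t ∈ s, (if t ∈ Icc a θ then f t - leftLim f t else 0) := by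
        rw [Finset.mul_sum]; exact Finset.sum_le_sum fun t _ => hterm t
    _ ≤ C / (1 - f θ) * f θ := by
        rw [← Finset.sum_filter]
        gcongr
        exact hf.sum_sub_leftLim_le hf0 _ fun t ht => (Finset.mem_filter.1 ht).2.2
    _ = f θ / (1 - f θ) * C := by ring

end Monotone

theorem jump_sum_estimate_general
    (F Λ₀ : ℝ → ℝ) (Λn : ℕ → ℝ → ℝ) (θ : ℝ)
    (hFmono : Monotone F) (hF0 : ∀ t, 0 ≤ F t)
    (hFθ : F θ < 1)
    (hΛmono : Monotone Λ₀) (hΛnmono : ∀ n, Monotone (Λn n))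
    (hΛneg : ∀ t < (0 : ℝ), Λ₀ t = 0) (hΛnneg : ∀ n, ∀ t < (0 : ℝ), Λn n t = 0)
    (hconv : Tendsto (fun n : ℕ => ⨆ t ∈ Icc (0 : ℝ) θ, |Λn n t - Λ₀ t|) atTop (𝓝 0)) :
    (∀ n : ℕ,
      (∑' t : ℝ, if t ∈ Icc (0 : ℝ) θ then
          (F t - leftLim F t) / (1 - F t)
            * |(Λn n t - leftLim (Λn n) t) - (Λ₀ t - leftLim Λ₀ t)|
        else 0)
      ≤ F θ / (1 - F θ)
        * ((⨆ t ∈ Icc (0 : ℝ) θ, |Λn n t - Λ₀ t|)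
            + ⨆ t ∈ Icc (0 : ℝ) θ, |leftLim (Λn n) t - leftLim Λ₀ t|))
    ∧ Tendsto
      (fun n : ℕ => ∑' t : ℝ, if t ∈ Icc (0 : ℝ) θ then
          (F t - leftLim F t) / (1 - F t)
            * |(Λn n t - leftLim (Λn n) t) - (Λ₀ t - leftLim Λ₀ t)|
        else 0)
      atTop (𝓝 0) := by
  set S₁ : ℕ → ℝ := fun n => ⨆ t ∈ Icc (0 : ℝ) θ, |Λn n t - Λ₀ t|
  set S₂ : ℕ → ℝ := fun n => ⨆ t ∈ Icc (0 : ℝ) θ, |leftLim (Λn n) t - leftLim Λ₀ t|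
  have hS₂_le : ∀ n, S₂ n ≤ S₁ n := fun n =>
    (hΛnmono n).biSup_abs_leftLim_sub_le hΛmono fun t ht => (hΛnneg n t ht).trans (hΛneg t ht).symm
  have hS₂_nonneg : ∀ n, 0 ≤ S₂ n := fun n =>
    Real.iSup_nonneg fun _ => Real.iSup_nonneg fun _ => abs_nonneg _
  have hjump : ∀ n, ∀ t ∈ Icc (0 : ℝ) θ,
      |(Λn n t - leftLim (Λn n) t) - (Λ₀ t - leftLim Λ₀ t)| ≤ S₁ n + S₂ n := fun n t ht => by
    rw [sub_sub_sub_comm]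
    exact (abs_sub _ _).trans (add_le_add ((hΛnmono n).abs_sub_le_biSup hΛmono ht)
      ((hΛnmono n).leftLim.abs_sub_le_biSup hΛmono.leftLim ht))
  have hbound := fun n => hFmono.tsum_sub_leftLim_div_mul_le hF0 hFθ
    (add_nonneg ((hS₂_nonneg n).trans (hS₂_le n)) (hS₂_nonneg n)) (hjump n)
  refine ⟨hbound, squeeze_zero (fun n => tsum_nonneg fun t => ?_) hbound ?_⟩
  · split_ifs with ht
    · exact mul_nonneg (div_nonneg (hFmono.sub_leftLim_nonneg t)
        (sub_nonneg.2 ((hFmono ht.2).trans hFθ.le))) (abs_nonneg _)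
    · exact le_rfl
  · simpa using ((hconv.add (squeeze_zero hS₂_nonneg hS₂_le hconv)).const_mul (F θ / (1 - F θ)))

/-- jump-sum estimate from the proof of Theorem 3.3. For a cdf `F`
(of a nonnegative variable) with `F(θ) < 1` and nondecreasing `Λⁿ, Λ` vanishing on
`(−∞, 0)` with `sup_{[0,θ]} |Λⁿ − Λ| → 0`, the weighted sum of jump differences over the
jump points of `F` in `[0, θ]` is bounded by
`(F(θ)/(1 − F(θ))) (sup |Λⁿ − Λ| + sup |Λⁿ(·−) − Λ(·−)|)`, and hence tends to `0`. -/
theorem jump_sum_estimate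
    (F Λ₀ : ℝ → ℝ) (Λn : ℕ → ℝ → ℝ) (θ : ℝ) (hθ : 0 ≤ θ)
    (hFmono : Monotone F) (hF0 : ∀ t, 0 ≤ F t) (hFneg : ∀ t < (0 : ℝ), F t = 0)
    (hFθ : F θ < 1)
    (hΛmono : Monotone Λ₀) (hΛnmono : ∀ n, Monotone (Λn n))
    (hΛneg : ∀ t < (0 : ℝ), Λ₀ t = 0) (hΛnneg : ∀ n, ∀ t < (0 : ℝ), Λn n t = 0)
    (hconv : Tendsto (fun n : ℕ => ⨆ t ∈ Icc (0 : ℝ) θ, |Λn n t - Λ₀ t|) atTop (𝓝 0)) :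
    (∀ n : ℕ,
      (∑' t : ℝ, if t ∈ Icc (0 : ℝ) θ then
          (F t - leftLim F t) / (1 - F t)
            * |(Λn n t - leftLim (Λn n) t) - (Λ₀ t - leftLim Λ₀ t)|
        else 0)
      ≤ F θ / (1 - F θ)
        * ((⨆ t ∈ Icc (0 : ℝ) θ, |Λn n t - Λ₀ t|)
            + ⨆ t ∈ Icc (0 : ℝ) θ, |leftLim (Λn n) t - leftLim Λ₀ t|))
    ∧ Tendsto
      (fun n : ℕ => ∑' t : ℝ, if t ∈ Icc (0 : ℝ) θ then
          (F t - leftLim F t) / (1 - F t)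
            * |(Λn n t - leftLim (Λn n) t) - (Λ₀ t - leftLim Λ₀ t)|
        else 0)
      atTop (𝓝 0) :=
  jump_sum_estimate_general F Λ₀ Λn θ hFmono hF0 hFθ hΛmono hΛnmono hΛneg hΛnneg hconv
end
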